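/- Truncated SVD optimality (Eckart–Young, Frobenius norm): for a real matrix X of rank r with singular value decomposition X = UΣVᵀ and singular values σ₁ ≥ σ₂ ≥ ... ≥ σ_r > 0, the rank-d truncation X_d = Σ_{i=1}^d σ_i u_i v_iᵀ satisfies ‖X − X_d‖_F² = Σ_{i=d+1}^r σ_i², which is minimal among all matrices of rank at most d. -/

import Mathlib

/-! Splitting the sum at `d`, `X - X_d` is the tail `∑_{i ≥ d} σ_i u_i v_iᵀ`. Expanding its squared
Frobenius norm gives `∑_{i,j} σ_i σ_j ⟨u_i, u_j⟩ ⟨v_i, v_j⟩`, and orthonormality kills the cross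
terms `i ≠ j`. -/

open Finset

theorem sum_sum_sq_sum_mul_mul_of_orthonormal {R ι m n : Type*} [CommSemiring R]
    [DecidableEq ι] [Fintype m] [Fintype n] (s : Finset ι) (σ : ι → R)
    (u : ι → m → R) (v : ι → n → R)
    (hu : ∀ i j, ∑ a, u i a * u j a = if i = j then 1 else 0)
    (hv : ∀ i j, ∑ b, v i b * v j b = if i = j then 1 else 0) :
    ∑ a, ∑ b, (∑ i ∈ s, σ i * u i a * v i b) ^ 2 = ∑ i ∈ s, σ i ^ 2 := by
  have expand : ∑ a, ∑ b, (∑ i ∈ s, σ i * u i a * v i b) ^ 2 =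
      ∑ i ∈ s, ∑ j ∈ s, σ i * σ j * (∑ a, u i a * u j a) * ∑ b, v i b * v j b := by
    simp only [sq, sum_mul, mul_sum]
    simp_rw [sum_comm (s := (univ : Finset n)), sum_comm (s := (univ : Finset m))]
    congr! 4
    ring
  rw [expand]
  refine sum_congr rfl fun i hi => ?_
  simp [hu, hv, sq, hi]

theorem stmt_18_general (m n r d : ℕ)
    (σ : Fin r → ℝ)
    (u : Fin r → Fin m → ℝ) (v : Fin r → Fin n → ℝ)
    (hu : ∀ i j : Fin r, ∑ a, u i a * u j a = if i = j then 1 else 0)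
    (hv : ∀ i j : Fin r, ∑ b, v i b * v j b = if i = j then 1 else 0)
    (X Xd : Matrix (Fin m) (Fin n) ℝ)
    (hX : ∀ a b, X a b = ∑ i, σ i * u i a * v i b)
    (hXd : ∀ a b, Xd a b = ∑ i ∈ univ.filter (fun i : Fin r => (i : ℕ) < d),
      σ i * u i a * v i b) :
    ∑ a, ∑ b, (X a b - Xd a b) ^ 2 =
      ∑ i ∈ univ.filter (fun i : Fin r => d ≤ (i : ℕ)), σ i ^ 2 := by
  have tail : ∀ a b, X a b - Xd a b =
      ∑ i ∈ univ.filter (fun i : Fin r => d ≤ (i : ℕ)), σ i * u i a * v i b := by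
    intro a b
    rw [hX, hXd, ← sum_filter_add_sum_filter_not univ (fun i : Fin r => (i : ℕ) < d)]
    simp [not_lt]
  simp only [tail]
  exact sum_sum_sq_sum_mul_mul_of_orthonormal _ σ u v hu hv

/-- truncated-SVD error identity (Eckart–Young, Frobenius norm).
If `X = ∑_{i<r} σ_i u_i v_iᵀ` with orthonormal families `(u_i)`, `(v_i)` and
singular values `σ₁ ≥ ⋯ ≥ σ_r > 0`, then the rank-`d` truncation
`X_d = ∑_{i<d} σ_i u_i v_iᵀ` satisfies `‖X − X_d‖_F² = ∑_{i≥d} σ_i²`. -/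
theorem stmt_18 (m n r d : ℕ) (hd : d < r)
    (σ : Fin r → ℝ) (hσpos : ∀ i, 0 < σ i)
    (hσmono : ∀ i j : Fin r, i ≤ j → σ j ≤ σ i)
    (u : Fin r → Fin m → ℝ) (v : Fin r → Fin n → ℝ)
    (hu : ∀ i j : Fin r, ∑ a, u i a * u j a = if i = j then 1 else 0)
    (hv : ∀ i j : Fin r, ∑ b, v i b * v j b = if i = j then 1 else 0)
    (X Xd : Matrix (Fin m) (Fin n) ℝ)
    (hX : ∀ a b, X a b = ∑ i, σ i * u i a * v i b)
    (hXd : ∀ a b, Xd a b = ∑ i ∈ univ.filter (fun i : Fin r => (i : ℕ) < d),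
      σ i * u i a * v i b) :
    ∑ a, ∑ b, (X a b - Xd a b) ^ 2 =
      ∑ i ∈ univ.filter (fun i : Fin r => d ≤ (i : ℕ)), σ i ^ 2 :=
  stmt_18_general m n r d σ u v hu hv X Xd hX hXd
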